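/- Let A ⊂ ℝ be a finite convex set and let a₁ < b₁ ≤ a₂ < b₂ ≤ ⋯ ≤ a_k < b_k be elements of A such that b_{i+1} − a_{i+1} ≤ b_i − a_i for all 1 ≤ i < k. Then the number of elements of A lying in the union of the open intervals (a₁,b₁), (a₂,b₂), …, (a_k,b_k) is at least k(k−1)/2. -/

import Mathlib

/-
List `A` increasingly and let the interval `(aᵢ, bᵢ)` span `mᵢ` consecutive gaps of `A`.
Its length is at most `mᵢ D`, where `D` is the last of these gaps; by convexity every gap of the
later interval `(aᵢ₊₁, bᵢ₊₁)` exceeds `D`, so its length exceeds `mᵢ₊₁ D`. As the lengths do not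
increase, `mᵢ₊₁ < mᵢ`. Hence `(aᵢ, bᵢ)` contains `mᵢ - 1 ≥ k - 1 - i` points of `A`, and the
intervals are disjoint, so together they contain at least `0 + 1 + ⋯ + (k - 1)` points.
-/

/-- A finite set `A ⊆ ℝ` is *convex* if, listing its elements in increasing order,
the consecutive differences form a strictly increasing sequence. -/
def IsConvexSet (A : Finset ℝ) : Prop :=
  ∀ i : ℕ, i + 2 < A.card →
    (A.sort (· ≤ ·)).getD (i + 1) 0 - (A.sort (· ≤ ·)).getD i 0 <
      (A.sort (· ≤ ·)).getD (i + 2) 0 - (A.sort (· ≤ ·)).getD (i + 1) 0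

open Finset

theorem sub_eq_sum_range_sub_add {G : Type*} [AddCommGroup G] (f : ℕ → G) (p m : ℕ) :
    f (p + m) - f p = ∑ j ∈ range m, (f (p + j + 1) - f (p + j)) :=
  (sum_range_sub (fun j => f (p + j)) m).symm

theorem sub_lt_sub_of_strictMonoOn_sub {G : Type*} [AddCommGroup G] [LinearOrder G]
    [IsOrderedAddMonoid G] {f : ℕ → G} {N p q p' q' : ℕ}
    (hf : StrictMonoOn (fun i => f (i + 1) - f i) (Set.Iio N))
    (hpq : p ≤ q) (hqp' : q ≤ p') (hpq' : p' ≤ q') (hq'N : q' ≤ N)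
    (hpos : f p < f q) (hle : f q' - f p' ≤ f q - f p) : q' - p' < q - p := by
  obtain ⟨m, rfl⟩ := Nat.exists_eq_add_of_le hpq
  obtain ⟨m', rfl⟩ := Nat.exists_eq_add_of_le hpq'
  rw [Nat.add_sub_cancel_left, Nat.add_sub_cancel_left]
  have hm : m ≠ 0 := by rintro rfl; simp at hpos
  set D := f (p + m - 1 + 1) - f (p + m - 1)
  have hupper : f (p + m) - f p ≤ m • D := by
    rw [sub_eq_sum_range_sub_add]
    refine (sum_le_card_nsmul _ _ D fun j hj => ?_).trans_eq (by rw [card_range])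
    rw [mem_range] at hj
    exact hf.monotoneOn (show p + j < N by omega) (show p + m - 1 < N by omega) (by omega)
  have hD : 0 < D := (nsmul_pos_iff hm).1 ((sub_pos.2 hpos).trans_le hupper)
  rcases Nat.eq_zero_or_pos m' with rfl | hm'
  · exact Nat.pos_of_ne_zero hm
  have hlower : m' • D < f (p' + m') - f p' := by
    rw [sub_eq_sum_range_sub_add]
    calc m' • D = ∑ _j ∈ range m', D := by rw [sum_const, card_range]
      _ < _ := sum_lt_sum_of_nonempty (nonempty_range_iff.2 hm'.ne') fun j hj => by
        rw [mem_range] at hj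
        exact hf (show p + m - 1 < N by omega) (show p' + j < N by omega) (by omega)
  exact (nsmul_lt_nsmul_iff_left hD).1 (hlower.trans_le (hle.trans hupper))

theorem sum_range_id_le_sum_of_lt {c : ℕ → ℕ} {k : ℕ} (hc : ∀ i, i + 1 < k → c (i + 1) < c i) :
    k * (k - 1) / 2 ≤ ∑ i ∈ range k, c i := by
  have hbound : ∀ j i, i + j + 1 = k → j ≤ c i := by
    intro j
    induction j with
    | zero => exact fun _ _ => Nat.zero_le _
    | succ j ih => exact fun i hi => (ih (i + 1) (by omega)).trans_lt (hc i (by omega))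
  calc k * (k - 1) / 2 = ∑ i ∈ range k, (k - 1 - i) := by
        rw [← sum_range_id]; exact (sum_range_reflect id k).symm
    _ ≤ ∑ i ∈ range k, c i := sum_le_sum fun i hi => hbound _ _ (by rw [mem_range] at hi; omega)

section SortedFinset

variable {α : Type*} [LinearOrder α] (A : Finset α) (x₀ : α) {x y : α}

theorem strictMonoOn_getD_sort :
    StrictMonoOn (fun i => (A.sort (· ≤ ·)).getD i x₀) (Set.Iio #A) := by
  intro i hi j hj hij
  simp only [Set.mem_Iio, ← length_sort (· ≤ ·)] at hi hj
  simp only [List.getD_eq_getElem _ _ hi, List.getD_eq_getElem _ _ hj]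
  exact A.sortedLT_sort.getElem_lt_getElem_iff.2 hij

theorem getD_sort_mem {i : ℕ} (hi : i < #A) : (A.sort (· ≤ ·)).getD i x₀ ∈ A := by
  rw [← length_sort (· ≤ ·)] at hi
  rw [List.getD_eq_getElem _ _ hi, ← mem_sort (· ≤ ·)]
  exact List.getElem_mem hi

variable {A}

theorem idxOf_sort_lt_card (hx : x ∈ A) : (A.sort (· ≤ ·)).idxOf x < #A := by
  simpa using List.idxOf_lt_length_of_mem ((mem_sort (· ≤ ·)).2 hx)

theorem getD_sort_idxOf (hx : x ∈ A) :
    (A.sort (· ≤ ·)).getD ((A.sort (· ≤ ·)).idxOf x) x₀ = x := by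
  have h := List.idxOf_lt_length_of_mem ((mem_sort (· ≤ ·)).2 hx)
  rw [List.getD_eq_getElem _ _ h, List.getElem_idxOf]

theorem idxOf_sort_getD {i : ℕ} (hi : i < #A) :
    (A.sort (· ≤ ·)).idxOf ((A.sort (· ≤ ·)).getD i x₀) = i := by
  rw [← length_sort (· ≤ ·)] at hi
  rw [List.getD_eq_getElem _ _ hi]
  exact List.get_idxOf (sort_nodup _ _) ⟨i, hi⟩

theorem idxOf_sort_lt_idxOf_sort_iff (hx : x ∈ A) (hy : y ∈ A) :
    (A.sort (· ≤ ·)).idxOf x < (A.sort (· ≤ ·)).idxOf y ↔ x < y := by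
  have := (strictMonoOn_getD_sort A x).lt_iff_lt (idxOf_sort_lt_card hx) (idxOf_sort_lt_card hy)
  rwa [getD_sort_idxOf x hx, getD_sort_idxOf x hy, Iff.comm] at this

theorem idxOf_sort_le_idxOf_sort_iff (hx : x ∈ A) (hy : y ∈ A) :
    (A.sort (· ≤ ·)).idxOf x ≤ (A.sort (· ≤ ·)).idxOf y ↔ x ≤ y := by
  simpa only [not_lt] using (idxOf_sort_lt_idxOf_sort_iff hy hx).not

theorem card_filter_lt_lt_eq (hx : x ∈ A) (hy : y ∈ A) :
    #(A.filter fun z => x < z ∧ z < y) =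
      (A.sort (· ≤ ·)).idxOf y - (A.sort (· ≤ ·)).idxOf x - 1 := by
  rw [← Nat.card_Ioo]
  refine card_nbij' (A.sort (· ≤ ·)).idxOf (fun i => (A.sort (· ≤ ·)).getD i x) ?_ ?_
    (fun z _ => getD_sort_idxOf x (mem_filter.1 ‹_›).1) ?_
  · intro z hz
    obtain ⟨hzA, hxz, hzy⟩ := mem_filter.1 hz
    exact mem_Ioo.2 ⟨(idxOf_sort_lt_idxOf_sort_iff hx hzA).2 hxz,
      (idxOf_sort_lt_idxOf_sort_iff hzA hy).2 hzy⟩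
  · intro i hi
    obtain ⟨hxi, hiy⟩ := mem_Ioo.1 hi
    have hiA : i < #A := hiy.trans (idxOf_sort_lt_card hy)
    have hmono := strictMonoOn_getD_sort A x
    refine mem_filter.2 ⟨getD_sort_mem A x hiA, ?_, ?_⟩
    · simpa only [getD_sort_idxOf x hx] using hmono (idxOf_sort_lt_card hx) hiA hxi
    · simpa only [getD_sort_idxOf x hy] using hmono hiA (idxOf_sort_lt_card hy) hiy
  · intro i hi
    exact idxOf_sort_getD x ((mem_Ioo.1 hi).2.trans (idxOf_sort_lt_card hy))

end SortedFinset

theorem card_filter_exists_lt_lt_eq_sum {α : Type*} [LinearOrder α] (A : Finset α) {k : ℕ}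
    {a b : ℕ → α} (hab : ∀ i < k, a i ≤ b i) (hchain : ∀ i, i + 1 < k → b i ≤ a (i + 1)) :
    #(A.filter fun x => ∃ i < k, a i < x ∧ x < b i) =
      ∑ i ∈ range k, #(A.filter fun x => a i < x ∧ x < b i) := by
  have hba : ∀ i j, i < j → j < k → b i ≤ a j := by
    intro i j hij hj
    induction j, hij using Nat.le_induction with
    | base => exact hchain i hj
    | succ j hij ih => exact (ih (by omega)).trans ((hab j (by omega)).trans (hchain j hj))
  have hdisj : ∀ i j, i < j → j < k → Disjoint (A.filter fun x => a i < x ∧ x < b i)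
      (A.filter fun x => a j < x ∧ x < b j) := fun i j hij hj =>
    disjoint_filter.2 fun x _ hi hj' => (hi.2.trans_le (hba i j hij hj)).not_gt hj'.1
  rw [← card_biUnion]
  · congr 1
    ext x
    simp only [mem_filter, mem_biUnion, mem_range]
    aesop
  · intro i hi j hj hne
    rcases hne.lt_or_gt with h | h
    · exact hdisj i j h (mem_range.1 hj)
    · exact (hdisj j i h (mem_range.1 hi)).symm

theorem IsConvexSet.strictMonoOn_sub {A : Finset ℝ} (hA : IsConvexSet A) :
    StrictMonoOn (fun i => (A.sort (· ≤ ·)).getD (i + 1) 0 - (A.sort (· ≤ ·)).getD i 0)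
      (Set.Iio (#A - 1)) :=
  strictMonoOn_of_lt_add_one Set.ordConnected_Iio fun i _ _ hi =>
    hA i (by rw [Set.mem_Iio] at hi; omega)

theorem IsConvexSet.idxOf_sub_idxOf_lt {A : Finset ℝ} (hA : IsConvexSet A) {x y x' y' : ℝ}
    (hx : x ∈ A) (hy : y ∈ A) (hx' : x' ∈ A) (hy' : y' ∈ A)
    (hxy : x < y) (hyx' : y ≤ x') (hxy' : x' ≤ y') (hle : y' - x' ≤ y - x) :
    (A.sort (· ≤ ·)).idxOf y' - (A.sort (· ≤ ·)).idxOf x' <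
      (A.sort (· ≤ ·)).idxOf y - (A.sort (· ≤ ·)).idxOf x := by
  refine sub_lt_sub_of_strictMonoOn_sub (f := fun i => (A.sort (· ≤ ·)).getD i 0)
    hA.strictMonoOn_sub ((idxOf_sort_le_idxOf_sort_iff hx hy).2 hxy.le)
    ((idxOf_sort_le_idxOf_sort_iff hy hx').2 hyx') ((idxOf_sort_le_idxOf_sort_iff hx' hy').2 hxy')
    (Nat.le_sub_one_of_lt (idxOf_sort_lt_card hy')) ?_ ?_
  · simpa only [getD_sort_idxOf 0 hx, getD_sort_idxOf 0 hy] using hxy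
  · simpa only [getD_sort_idxOf 0 hx, getD_sort_idxOf 0 hy, getD_sort_idxOf 0 hx',
      getD_sort_idxOf 0 hy'] using hle

open Classical in
/-- If `A ⊆ ℝ` is convex and `a₁ < b₁ ≤ a₂ < b₂ ≤ ⋯ ≤ a_k < b_k` are elements of `A` with
`b_{i+1} − a_{i+1} ≤ b_i − a_i` for all `i`, then `A` has at least `k(k−1)/2` elements in the
union of the open intervals `(a_i, b_i)`. -/
theorem convex_set_interval_count (A : Finset ℝ) (hA : IsConvexSet A)
    (k : ℕ) (a b : ℕ → ℝ)
    (ha : ∀ i < k, a i ∈ A) (hb : ∀ i < k, b i ∈ A)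
    (hab : ∀ i < k, a i < b i)
    (hchain : ∀ i, i + 1 < k → b i ≤ a (i + 1))
    (hdec : ∀ i, i + 1 < k → b (i + 1) - a (i + 1) ≤ b i - a i) :
    k * (k - 1) / 2 ≤ (A.filter fun x => ∃ i < k, a i < x ∧ x < b i).card := by
  set idx := (A.sort (· ≤ ·)).idxOf
  have hshrink : ∀ i, i + 1 < k → idx (b (i + 1)) - idx (a (i + 1)) < idx (b i) - idx (a i) :=
    fun i hi => hA.idxOf_sub_idxOf_lt (ha i (by omega)) (hb i (by omega)) (ha (i + 1) hi)
      (hb (i + 1) hi) (hab i (by omega)) (hchain i hi) (hab (i + 1) hi).le (hdec i hi)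
  rw [card_filter_exists_lt_lt_eq_sum A (fun i hi => (hab i hi).le) hchain]
  calc k * (k - 1) / 2 ≤ ∑ i ∈ range k, (idx (b i) - idx (a i) - 1) :=
        sum_range_id_le_sum_of_lt fun i hi => by
          have := hshrink i hi
          have : idx (a (i + 1)) < idx (b (i + 1)) :=
            (idxOf_sort_lt_idxOf_sort_iff (ha (i + 1) hi) (hb (i + 1) hi)).2 (hab (i + 1) hi)
          omega
    _ = ∑ i ∈ range k, #(A.filter fun x => a i < x ∧ x < b i) :=
        sum_congr rfl fun i hi =>
          (card_filter_lt_lt_eq (ha i (mem_range.1 hi)) (hb i (mem_range.1 hi))).symm
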